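/- For every n ≥ 1, the product F_n F_{n+1} F_{n+2} of three consecutive Fibonacci numbers is a sum of two rational cubes. -/

import Mathlib

/-!
Writing `X = F_{n+2}`, `Y = F_{n+1}`, we have `F_n = X - Y`, so the product is `g(X, Y) = XY(X - Y)`.
A polynomial identity expresses `27 g(X, Y) (X² - XY + Y²)³` as a sum of two cubes of integral
cubic forms, and `X² - XY + Y²` is positive definite, so dividing by `(3(X² - XY + Y²))³` writes
every value of `g` on an ordered field as a sum of two cubes.
-/

theorem cube_add_cube_eq_mul_mul_sub_mul_cube {R : Type*} [CommRing R] (X Y : R) :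
    (-X ^ 3 + 6 * X ^ 2 * Y - 3 * X * Y ^ 2 - Y ^ 3) ^ 3
        + (X ^ 3 + 3 * X ^ 2 * Y - 6 * X * Y ^ 2 + Y ^ 3) ^ 3
      = 27 * (X * Y * (X - Y)) * (X ^ 2 - X * Y + Y ^ 2) ^ 3 := by
  ring

theorem exists_mul_mul_sub_eq_cube_add_cube {K : Type*} [Field K] [LinearOrder K]
    [IsStrictOrderedRing K] (X Y : K) : ∃ p q : K, X * Y * (X - Y) = p ^ 3 + q ^ 3 := by
  rcases eq_or_ne Y 0 with rfl | hY
  · exact ⟨0, 0, by ring⟩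
  have hs : 0 < X ^ 2 - X * Y + Y ^ 2 := by
    nlinarith [sq_nonneg (2 * X - Y), sq_pos_of_ne_zero hY]
  set d := 3 * (X ^ 2 - X * Y + Y ^ 2)
  have hd : d ≠ 0 := by positivity
  refine ⟨(-X ^ 3 + 6 * X ^ 2 * Y - 3 * X * Y ^ 2 - Y ^ 3) / d,
    (X ^ 3 + 3 * X ^ 2 * Y - 6 * X * Y ^ 2 + Y ^ 3) / d, ?_⟩
  rw [div_pow, div_pow, ← add_div, cube_add_cube_eq_mul_mul_sub_mul_cube,
    eq_div_iff (pow_ne_zero 3 hd)]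
  ring

theorem Nat.cast_fib_mul_fib_succ_mul_fib_add_two {R : Type*} [CommRing R] (n : ℕ) :
    ((fib n * fib (n + 1) * fib (n + 2) : ℕ) : R)
      = fib (n + 2) * fib (n + 1) * ((fib (n + 2) : R) - fib (n + 1)) := by
  rw [fib_add_two]
  push_cast
  ring

theorem stmt_13_general (n : ℕ) :
    ∃ q₁ q₂ : ℚ, (Nat.fib n * Nat.fib (n + 1) * Nat.fib (n + 2) : ℕ) = q₁^3 + q₂^3 := by
  rw [Nat.cast_fib_mul_fib_succ_mul_fib_add_two]
  exact exists_mul_mul_sub_eq_cube_add_cube _ _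

theorem stmt_13 (n : ℕ) (hn : 1 ≤ n) :
    ∃ q₁ q₂ : ℚ, (Nat.fib n * Nat.fib (n + 1) * Nat.fib (n + 2) : ℕ) = q₁^3 + q₂^3 :=
  stmt_13_general n
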